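/- arXiv:1809.08543 — 5 statements merged into one kernel-verified Lean document; each statement's English description precedes it below -/
import Mathlib

section
/- Let (V, B) be an anti-Hermitian space over a ring R with pseudoinvolution, and 𝔥 its Heisenberg group. The map ⇀ : 𝔥 × R → 𝔥 defined by (v, x) ⇀ y = (vy, ȳ·(1̄)⁻¹·x·y) is a right action of the multiplicative monoid (R, ·) on the set 𝔥, and it distributes over the group operation: (α ∔ β) ⇀ y = (α ⇀ y) ∔ (β ⇀ y) for all α, β ∈ 𝔥 and y ∈ R. -/
open MulOpposite

def heisMul {R : Type*} [Ring R] {V : Type*} [AddCommGroup V]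
    (B : V → V → R) (p q : V × R) : V × R :=
  (p.1 + q.1, p.2 + q.2 + B p.1 q.1)

def heisInv {R : Type*} [Ring R] {V : Type*} [AddCommGroup V]
    (B : V → V → R) (p : V × R) : V × R :=
  (-p.1, -p.2 + B p.1 p.1)

def heisAct {R : Type*} [Ring R] {V : Type*} [AddCommGroup V] [Module Rᵐᵒᵖ V]
    (bar : R → R) (e : Rˣ) (p : V × R) (y : R) : V × R :=
  (op y • p.1, bar y * (↑e⁻¹ : R) * p.2 * y)

def heisTr {R : Type*} [Ring R] {V : Type*} [AddCommGroup V]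
    (bar : R → R) (B : V → V → R) (p : V × R) : R :=
  p.2 - bar p.2 - B p.1 p.1

/-- (v,x) ⇀ y = (vy, ȳ·(1̄)⁻¹·x·y) is a right action of the multiplicative
monoid of R on the Heisenberg group, distributing over the Heisenberg operation. -/
theorem stmt3 {R : Type*} [Ring R] {V : Type*} [AddCommGroup V] [Module Rᵐᵒᵖ V]
    (bar : R → R) (e : Rˣ) (he : (e : R) = bar 1)
    (hbar_add : ∀ x y : R, bar (x + y) = bar x + bar y)
    (hbar_mul : ∀ x y : R, bar (x * y) = bar y * (↑e⁻¹ : R) * bar x)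
    (hbar_bar : ∀ x : R, bar (bar x) = x)
    (B : V → V → R)
    (hB_addl : ∀ u v w : V, B (u + v) w = B u w + B v w)
    (hB_addr : ∀ u v w : V, B u (v + w) = B u v + B u w)
    (hB_sesq : ∀ (v w : V) (x y : R),
      B (op x • v) (op y • w) = bar x * (↑e⁻¹ : R) * B v w * y)
    (hB_skew : ∀ v w : V, B v w = - bar (B w v)) :
    (∀ p : V × R, heisAct bar e p 1 = p) ∧
    (∀ (p : V × R) (y z : R),
      heisAct bar e (heisAct bar e p y) z = heisAct bar e p (y * z)) ∧
    (∀ (p q : V × R) (y : R),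
      heisAct bar e (heisMul B p q) y = heisMul B (heisAct bar e p y) (heisAct bar e q y)) := by
  refine ⟨?_, ?_, ?_⟩
  · intro p
    simp [heisAct, ← he]
  · intro p y z
    simp only [heisAct, smul_smul, ← op_mul, Prod.mk.injEq]
    constructor
    · trivial
    · rw [hbar_mul]
      noncomm_ring
  · intro p q y
    simp only [heisAct, heisMul, smul_add, hB_sesq, Prod.mk.injEq]
    constructor
    · trivial
    · noncomm_ring
end

section
/- Let (V, B) be an anti-Hermitian space over a ring R with pseudoinvolution, and 𝔥 its Heisenberg group. Then the subset 𝔏_min := {(0, x + x̄) | x ∈ R} is a subgroup of 𝔥 that contains the commutator subgroup of 𝔥 and is stable under the action (v,x) ⇀ y = (vy, ȳ·(1̄)⁻¹·x·y). Consequently, any subgroup of 𝔥 containing 𝔏_min is normal in 𝔥. -/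
open MulOpposite

/-- 𝔏_min = {(0, x + x̄) | x ∈ R} is a subgroup of the Heisenberg group,
contains all commutators, is stable under ⇀, and consequently every subgroup
containing 𝔏_min is normal. -/
theorem stmt4 {R : Type*} [Ring R] {V : Type*} [AddCommGroup V] [Module Rᵐᵒᵖ V]
    (bar : R → R) (e : Rˣ) (he : (e : R) = bar 1)
    (hbar_add : ∀ x y : R, bar (x + y) = bar x + bar y)
    (hbar_mul : ∀ x y : R, bar (x * y) = bar y * (↑e⁻¹ : R) * bar x)
    (hbar_bar : ∀ x : R, bar (bar x) = x)
    (B : V → V → R)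
    (hB_addl : ∀ u v w : V, B (u + v) w = B u w + B v w)
    (hB_addr : ∀ u v w : V, B u (v + w) = B u v + B u w)
    (hB_sesq : ∀ (v w : V) (x y : R),
      B (op x • v) (op y • w) = bar x * (↑e⁻¹ : R) * B v w * y)
    (hB_skew : ∀ v w : V, B v w = - bar (B w v)) :
    (((0 : V), (0 : R)) ∈ {p : V × R | ∃ x : R, p = ((0 : V), x + bar x)}) ∧
    (∀ p ∈ {p : V × R | ∃ x : R, p = ((0 : V), x + bar x)},
      ∀ q ∈ {p : V × R | ∃ x : R, p = ((0 : V), x + bar x)},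
        heisMul B p q ∈ {p : V × R | ∃ x : R, p = ((0 : V), x + bar x)}) ∧
    (∀ p ∈ {p : V × R | ∃ x : R, p = ((0 : V), x + bar x)},
      heisInv B p ∈ {p : V × R | ∃ x : R, p = ((0 : V), x + bar x)}) ∧
    (∀ a b : V × R, heisMul B (heisMul B (heisMul B a b) (heisInv B a)) (heisInv B b)
      ∈ {p : V × R | ∃ x : R, p = ((0 : V), x + bar x)}) ∧
    (∀ p ∈ {p : V × R | ∃ x : R, p = ((0 : V), x + bar x)}, ∀ y : R,
      heisAct bar e p y ∈ {p : V × R | ∃ x : R, p = ((0 : V), x + bar x)}) ∧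
    (∀ S : Set (V × R),
      {p : V × R | ∃ x : R, p = ((0 : V), x + bar x)} ⊆ S →
      (((0 : V), (0 : R)) ∈ S) →
      (∀ p ∈ S, ∀ q ∈ S, heisMul B p q ∈ S) →
      (∀ p ∈ S, heisInv B p ∈ S) →
      ∀ a : V × R, ∀ s ∈ S, heisMul B (heisMul B a s) (heisInv B a) ∈ S) := by

  have hbar0 : bar 0 = 0 := by
    have h := hbar_add 0 0
    simp only [add_zero] at h
    have h2 : bar 0 + bar 0 = bar 0 + 0 := by rw [add_zero, ← h]
    exact add_left_cancel h2
  have hbar_neg : ∀ x : R, bar (-x) = - bar x := by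
    intro x
    have h : bar x + bar (-x) = 0 := by
      rw [← hbar_add]; simp [hbar0]
    rw [add_comm] at h
    exact eq_neg_of_add_eq_zero_left h
  have hB0l : ∀ w : V, B 0 w = 0 := by
    intro w
    have h := hB_addl 0 0 w
    simp only [add_zero] at h
    have h2 : B 0 w + B 0 w = B 0 w + 0 := by rw [add_zero, ← h]
    exact add_left_cancel h2
  have hB0r : ∀ v : V, B v 0 = 0 := by
    intro v
    have h := hB_addr v 0 0
    simp only [add_zero] at h
    have h2 : B v 0 + B v 0 = B v 0 + 0 := by rw [add_zero, ← h]
    exact add_left_cancel h2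
  have hBnegr : ∀ v w : V, B v (-w) = - B v w := by
    intro v w
    have h : B v w + B v (-w) = 0 := by
      rw [← hB_addr]; simp [hB0r]
    rw [add_comm] at h
    exact eq_neg_of_add_eq_zero_left h
  have hBnegl : ∀ v w : V, B (-v) w = - B v w := by
    intro v w
    have h : B v w + B (-v) w = 0 := by
      rw [← hB_addl]; simp [hB0l]
    rw [add_comm] at h
    exact eq_neg_of_add_eq_zero_left h
  have hbar_e : bar (e : R) = 1 := by rw [he, hbar_bar]
  have hbar_einv : bar ((↑e⁻¹ : R)) = (e : R) * (e : R) := by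
    have h1 : bar ((↑e⁻¹ : R) * (e : R)) = (e : R) := by
      rw [Units.inv_mul, ← he]
    rw [hbar_mul, hbar_e, one_mul] at h1
    calc bar (↑e⁻¹ : R) = ((e : R) * (↑e⁻¹ : R)) * bar (↑e⁻¹ : R) := by
          rw [Units.mul_inv, one_mul]
      _ = (e : R) * ((↑e⁻¹ : R) * bar (↑e⁻¹ : R)) := by rw [mul_assoc]
      _ = (e : R) * (e : R) := by rw [h1]
  refine ⟨⟨0, by simp [hbar0]⟩, ?_, ?_, ?_, ?_, ?_⟩
  · rintro p ⟨a, rfl⟩ q ⟨b, rfl⟩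
    exact ⟨a + b, by simp [heisMul, hB0l, hbar_add]; abel⟩
  · rintro p ⟨a, rfl⟩
    refine ⟨-a, ?_⟩
    simp only [heisInv, hB0l, hbar_neg, Prod.mk.injEq, neg_zero, add_zero, neg_add]
  · rintro ⟨v, x⟩ ⟨w, y⟩
    refine ⟨B v w, ?_⟩
    have hkey : bar (B v w) = - B w v := by
      rw [hB_skew v w, hbar_neg, hbar_bar]
    simp only [heisMul, heisInv, Prod.mk.injEq]
    rw [hkey]
    constructor
    · abel
    · simp only [hBnegr, hBnegl, hB_addl, neg_neg]
      abel
  · rintro p ⟨a, rfl⟩ y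
    refine ⟨bar y * (↑e⁻¹ : R) * a * y, ?_⟩
    have h1 : bar (bar y * (↑e⁻¹ : R)) = (e : R) * y := by
      rw [hbar_mul, hbar_einv, hbar_bar]
      simp [mul_assoc]
    have h2 : bar (bar y * (↑e⁻¹ : R) * a) = bar a * y := by
      rw [hbar_mul, h1]
      simp [mul_assoc]
    have h3 : bar (bar y * (↑e⁻¹ : R) * a * y) = bar y * (↑e⁻¹ : R) * bar a * y := by
      rw [hbar_mul, h2, ← mul_assoc]
    simp only [heisAct, Prod.mk.injEq, smul_zero, mul_add, add_mul]
    exact ⟨trivial, by rw [h3]⟩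
  · intro S hLS h0 hmul hinv a s hs
    rcases a with ⟨v, x⟩
    rcases s with ⟨w, y⟩
    have hc : ((0 : V), B v w - B w v) ∈ S := by
      apply hLS
      refine ⟨B v w, ?_⟩
      have hkey : bar (B v w) = - B w v := by
        rw [hB_skew v w, hbar_neg, hbar_bar]
      rw [hkey, ← sub_eq_add_neg]
    have := hmul _ hc _ hs
    have heq : heisMul B (heisMul B (v, x) (w, y)) (heisInv B (v, x))
        = heisMul B ((0 : V), B v w - B w v) (w, y) := by
      simp only [heisMul, heisInv, Prod.mk.injEq]
      constructor
      · abel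
      · simp only [hBnegr, hBnegl, hB_addl, hB0l, neg_neg]
        abel
    rw [heq]
    exact this
end

section
/- Let u be an isotropic vector in an odd quadratic space (V, B, Q_𝔏) and let (v₁, x), (v₂, y) ∈ 𝔏 with u orthogonal to v₁ and v₂. Then the ESD transvections satisfy T_{u,v₁}(x) ∘ T_{u,v₂}(y) = T_{u, v₁+v₂}(x + y + B(v₁, v₂)). -/
open MulOpposite

/-- The Eichler-Siegel-Dickson transvection T_{u,v}(x):
w ↦ w + u·(1̄)⁻¹(B(v,w) + x·B(u,w)) + v·B(u,w). -/
def ESD {R : Type*} [Ring R] {V : Type*} [AddCommGroup V] [Module Rᵐᵒᵖ V]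
    (e : Rˣ) (B : V → V → R) (u v : V) (x : R) (w : V) : V :=
  w + op ((↑e⁻¹ : R) * (B v w + x * B u w)) • u + op (B u w) • v

/-
Since `B u u = B u v₂ = 0`, the inner transvection `T_{u,v₂}(y)` does not change `B(u, ·)`, and since
also `B v₁ u = 0` (by skew-hermitianity) it changes `B(v₁, ·)` only by `B(v₁, v₂) B(u, w)`. Substituting
these two values into `T_{u,v₁}(x)` and expanding, every term is linear in `B(u, w)` or `B(v₁ + v₂, w)`,
and the coefficients add up to those of `T_{u, v₁+v₂}(x + y + B(v₁, v₂))`.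
-/

section Transvection

variable {R : Type*} [Ring R] {V : Type*} [AddCommGroup V] [Module Rᵐᵒᵖ V]
  (e : Rˣ) (B : V → V → R)

theorem form_op_smul_right_of_sesq (bar : R → R) (he : (e : R) = bar 1)
    (hB_sesq : ∀ (v w : V) (x y : R), B (op x • v) (op y • w) = bar x * (↑e⁻¹ : R) * B v w * y)
    (v w : V) (a : R) : B v (op a • w) = B v w * a := by
  conv_lhs => rw [← one_smul Rᵐᵒᵖ v, ← op_one, hB_sesq, ← he, Units.mul_inv, one_mul]

variable {B}
variable (hB_addr : ∀ u v w : V, B u (v + w) = B u v + B u w)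
  (hB_smul : ∀ (v w : V) (a : R), B v (op a • w) = B v w * a)
include hB_addr hB_smul

theorem form_ESD (u v z w : V) (x : R) :
    B z (ESD e B u v x w) = B z w + B z u * (↑e⁻¹ * (B v w + x * B u w)) + B z v * B u w := by
  simp only [ESD, hB_addr, hB_smul]

theorem ESD_comp_ESD (hB_addl : ∀ u v w : V, B (u + v) w = B u w + B v w)
    {u v₁ v₂ : V} (huu : B u u = 0) (hv₁u : B v₁ u = 0) (huv₂ : B u v₂ = 0) (x y : R) (w : V) :
    ESD e B u v₁ x (ESD e B u v₂ y w) = ESD e B u (v₁ + v₂) (x + y + B v₁ v₂) w := by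
  have hu : B u (ESD e B u v₂ y w) = B u w := by
    simp only [form_ESD e hB_addr hB_smul, huu, huv₂, zero_mul, add_zero]
  have hv₁ : B v₁ (ESD e B u v₂ y w) = B v₁ w + B v₁ v₂ * B u w := by
    simp only [form_ESD e hB_addr hB_smul, hv₁u, zero_mul, add_zero]
  rw [ESD, hu, hv₁]
  simp only [ESD, hB_addl, mul_add, add_mul, op_add, add_smul, smul_add]
  abel

end Transvection

theorem stmt7_general {R : Type*} [Ring R] {V : Type*} [AddCommGroup V] [Module Rᵐᵒᵖ V]
    (bar : R → R) (e : Rˣ) (he : (e : R) = bar 1)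
    (hbar_add : ∀ x y : R, bar (x + y) = bar x + bar y)
    (B : V → V → R)
    (hB_addl : ∀ u v w : V, B (u + v) w = B u w + B v w)
    (hB_addr : ∀ u v w : V, B u (v + w) = B u v + B u w)
    (hB_sesq : ∀ (v w : V) (x y : R),
      B (op x • v) (op y • w) = bar x * (↑e⁻¹ : R) * B v w * y)
    (hB_skew : ∀ v w : V, B v w = - bar (B w v))
    (u v₁ v₂ : V) (x y : R)
    (huu : B u u = 0)
    (horth₁ : B u v₁ = 0) (horth₂ : B u v₂ = 0) :
    ∀ w : V, ESD e B u v₁ x (ESD e B u v₂ y w) =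
      ESD e B u (v₁ + v₂) (x + y + B v₁ v₂) w := by
  have hbar_zero : bar 0 = 0 := (AddMonoidHom.mk' bar hbar_add).map_zero
  have hv₁u : B v₁ u = 0 := by rw [hB_skew, horth₁, hbar_zero, neg_zero]
  exact ESD_comp_ESD e hB_addr (form_op_smul_right_of_sesq e B bar he hB_sesq) hB_addl huu hv₁u
    horth₂ x y

/-- composition rule for ESD transvections with common isotropic vector u:
T_{u,v1}(x) ∘ T_{u,v2}(y) = T_{u,v1+v2}(x + y + B(v1,v2)). -/
theorem stmt7 {R : Type*} [Ring R] {V : Type*} [AddCommGroup V] [Module Rᵐᵒᵖ V]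
    (bar : R → R) (e : Rˣ) (he : (e : R) = bar 1)
    (hbar_add : ∀ x y : R, bar (x + y) = bar x + bar y)
    (hbar_mul : ∀ x y : R, bar (x * y) = bar y * (↑e⁻¹ : R) * bar x)
    (hbar_bar : ∀ x : R, bar (bar x) = x)
    (B : V → V → R)
    (hB_addl : ∀ u v w : V, B (u + v) w = B u w + B v w)
    (hB_addr : ∀ u v w : V, B u (v + w) = B u v + B u w)
    (hB_sesq : ∀ (v w : V) (x y : R),
      B (op x • v) (op y • w) = bar x * (↑e⁻¹ : R) * B v w * y)
    (hB_skew : ∀ v w : V, B v w = - bar (B w v))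
    (L : Set (V × R))
    (u v₁ v₂ : V) (x y : R)
    (hu_iso : ((u, (0 : R)) : V × R) ∈ L) (huu : B u u = 0)
    (hv₁ : ((v₁, x) : V × R) ∈ L) (hv₂ : ((v₂, y) : V × R) ∈ L)
    (horth₁ : B u v₁ = 0) (horth₂ : B u v₂ = 0) :
    ∀ w : V, ESD e B u v₁ x (ESD e B u v₂ y w) =
      ESD e B u (v₁ + v₂) (x + y + B v₁ v₂) w :=
  stmt7_general bar e he hbar_add B hB_addl hB_addr hB_sesq hB_skew u v₁ v₂ x y huu horth₁ horth₂
end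

section
/- For indices i ≠ ±j, the elementary extra short root transvections satisfy [T_i(v₀, x), T_j(w₀, y)] = T_{i,−j}(εᵢ·B₀(v₀, w₀)) for all (v₀, x), (w₀, y) in the odd form parameter 𝔏₀. -/
open MulOpposite

/-- The index i ↦ −i on Θ = {1,…,n} ⊔ {−1,…,−n}. -/
def negIdx {n : ℕ} : Fin n ⊕ Fin n → Fin n ⊕ Fin n := Sum.elim Sum.inr Sum.inl

/-- ε_k = (1̄)⁻¹ for positive k and ε_k = −1 for negative k. -/
def eps {R : Type*} [Ring R] (e : Rˣ) {n : ℕ} : Fin n ⊕ Fin n → R :=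
  Sum.elim (fun _ => (↑e⁻¹ : R)) (fun _ => (-1 : R))

/-- The elementary short root transvection T_{ij}(x). -/
def Tshort {R : Type*} [Ring R] {V₀ : Type*} {n : ℕ} (bar : R → R) (e : Rˣ)
    (i j : Fin n ⊕ Fin n) (x : R)
    (p : (Fin n ⊕ Fin n → R) × V₀) : (Fin n ⊕ Fin n → R) × V₀ :=
  (fun k => p.1 k + (if k = i then x * p.1 j else 0)
      + (if k = negIdx j then eps e (negIdx j) * bar x * eps e i * p.1 (negIdx i) else 0),
   p.2)

/-- The elementary extra short root transvection T_i(v₀, x) of the odd hyperbolic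
unitary group: e_k ↦ e_k for k ≠ −i, e_{−i} ↦ e_{−i} + e_i·εᵢ·x − v₀, and
w₀ ↦ w₀ − e_i·εᵢ·B₀(v₀, w₀) for w₀ ∈ V₀. -/
def Textra {R : Type*} [Ring R] {V₀ : Type*} [AddCommGroup V₀] [Module Rᵐᵒᵖ V₀]
    {n : ℕ} (e : Rˣ) (B₀ : V₀ → V₀ → R) (i : Fin n ⊕ Fin n) (v₀ : V₀) (x : R)
    (p : (Fin n ⊕ Fin n → R) × V₀) : (Fin n ⊕ Fin n → R) × V₀ :=
  (fun k => p.1 k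
      + (if k = i then eps e i * x * p.1 (negIdx i) - eps e i * B₀ v₀ p.2 else 0),
   p.2 - op (p.1 (negIdx i)) • v₀)

lemma negIdx_negIdx {n : ℕ} (k : Fin n ⊕ Fin n) : negIdx (negIdx k) = k := by
  cases k <;> rfl

lemma negIdx_ne {n : ℕ} (k : Fin n ⊕ Fin n) : negIdx k ≠ k := by
  cases k <;> simp [negIdx]

/-- for i ≠ ±j and (v₀,x), (w₀,y) ∈ 𝔏₀,
[T_i(v₀,x), T_j(w₀,y)] = T_{i,−j}(εᵢ·B₀(v₀,w₀)), stated in the equivalent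
inverse-free form T_i(v₀,x) ∘ T_j(w₀,y) = T_{i,−j}(εᵢB₀(v₀,w₀)) ∘ T_j(w₀,y) ∘ T_i(v₀,x). -/
theorem stmt16 {R : Type*} [Ring R] {V₀ : Type*} [AddCommGroup V₀] [Module Rᵐᵒᵖ V₀]
    (bar : R → R) (e : Rˣ) (he : (e : R) = bar 1)
    (hbar_add : ∀ x y : R, bar (x + y) = bar x + bar y)
    (hbar_mul : ∀ x y : R, bar (x * y) = bar y * (↑e⁻¹ : R) * bar x)
    (hbar_bar : ∀ x : R, bar (bar x) = x)
    (B₀ : V₀ → V₀ → R)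
    (hB_addl : ∀ u v w : V₀, B₀ (u + v) w = B₀ u w + B₀ v w)
    (hB_addr : ∀ u v w : V₀, B₀ u (v + w) = B₀ u v + B₀ u w)
    (hB_sesq : ∀ (v w : V₀) (x y : R),
      B₀ (op x • v) (op y • w) = bar x * (↑e⁻¹ : R) * B₀ v w * y)
    (hB_skew : ∀ v w : V₀, B₀ v w = - bar (B₀ w v))
    (L₀ : Set (V₀ × R))
    {n : ℕ} (i j : Fin n ⊕ Fin n) (hij : i ≠ j) (hij' : i ≠ negIdx j)
    (v₀ w₀ : V₀) (x y : R)
    (hv : ((v₀, x) : V₀ × R) ∈ L₀) (hw : ((w₀, y) : V₀ × R) ∈ L₀) :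
    ∀ p : (Fin n ⊕ Fin n → R) × V₀,
      Textra e B₀ i v₀ x (Textra e B₀ j w₀ y p)
        = Tshort bar e i (negIdx j) (eps e i * B₀ v₀ w₀)
            (Textra e B₀ j w₀ y (Textra e B₀ i v₀ x p)) := by
  -- index facts
  have hji : j ≠ i := hij.symm
  have hnij : negIdx i ≠ j := fun h => hij' (by rw [← h, negIdx_negIdx])
  have hnji : negIdx j ≠ i := fun h => hij' h.symm
  -- bar facts
  have hbar0 : bar 0 = 0 := by
    have h := hbar_add 0 0
    rw [add_zero] at h
    exact (left_eq_add.mp h)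
  have hbar_neg : ∀ z : R, bar (-z) = - bar z := by
    intro z
    have h := hbar_add z (-z)
    rw [add_neg_cancel, hbar0] at h
    exact eq_neg_of_add_eq_zero_right h.symm
  have hbar_e : bar (↑e : R) = 1 := by rw [he]; exact hbar_bar 1
  have hbar_einv : bar (↑e⁻¹ : R) = (↑e : R) * ↑e := by
    have h := hbar_mul (↑e⁻¹ : R) (↑e : R)
    rw [Units.inv_mul, ← he, hbar_e, one_mul] at h
    calc bar (↑e⁻¹ : R) = ↑e * (↑e⁻¹ * bar ↑e⁻¹) := by
          rw [← mul_assoc, Units.mul_inv, one_mul]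
      _ = ↑e * ↑e := by rw [← h]
  -- B₀ facts
  have hB0r : ∀ u : V₀, B₀ u 0 = 0 := by
    intro u
    have h := hB_addr u 0 0
    rw [add_zero] at h
    exact (left_eq_add.mp h)
  have hB_negr : ∀ u v : V₀, B₀ u (-v) = - B₀ u v := by
    intro u v
    have h := hB_addr u v (-v)
    rw [add_neg_cancel, hB0r] at h
    exact eq_neg_of_add_eq_zero_right h.symm
  have hB_subr : ∀ u v w : V₀, B₀ u (v - w) = B₀ u v - B₀ u w := by
    intro u v w
    rw [sub_eq_add_neg, hB_addr, hB_negr, ← sub_eq_add_neg]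
  have hB_smulr : ∀ (u v : V₀) (z : R), B₀ u (op z • v) = B₀ u v * z := by
    intro u v z
    have h := hB_sesq u v 1 z
    rw [op_one, one_smul, ← he, Units.mul_inv, one_mul] at h
    exact h
  -- the key scalar identity
  have heps : (↑e⁻¹ : R) * bar (eps e i) * eps e i = 1 := by
    cases i with
    | inl a =>
      simp only [eps, Sum.elim_inl]
      rw [hbar_einv, ← mul_assoc, Units.inv_mul, one_mul, Units.mul_inv]
    | inr a =>
      simp only [eps, Sum.elim_inr]
      rw [hbar_neg, ← he]
      simp [Units.inv_mul]
  have hbarB : bar (B₀ v₀ w₀) = - B₀ w₀ v₀ := by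
    rw [hB_skew v₀ w₀, hbar_neg, hbar_bar]
  have hkey : bar (eps e i * B₀ v₀ w₀) * eps e i = - B₀ w₀ v₀ := by
    rw [hbar_mul, mul_assoc, mul_assoc, ← mul_assoc (↑e⁻¹ : R), heps, mul_one, hbarB]
  intro p
  unfold Textra Tshort
  simp only [negIdx_negIdx]
  refine Prod.ext ?_ ?_
  · funext k
    dsimp only
    simp only [if_neg hnij, if_neg hnji, if_neg (negIdx_ne j), if_neg (negIdx_ne i),
      add_zero]
    rw [hB_subr, hB_subr, hB_smulr, hB_smulr,
      mul_assoc (eps e j) (bar (eps e i * B₀ v₀ w₀)) (eps e i), hkey]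
    split_ifs with h1 h2 h3 <;>
      first
        | exact absurd (h1.symm.trans h2) hji
        | noncomm_ring
        | simp
  · dsimp only
    simp only [if_neg hnij, if_neg hnji, add_zero]
    rw [sub_sub, sub_sub, add_comm]
end

section
/- For an index i, the extra short root transvections with the same index multiply according to the Heisenberg group operation: T_i(v₀, x)·T_i(w₀, y) = T_i((v₀, x) ∔ (w₀, y)) = T_i(v₀ + w₀, x + y + B₀(v₀, w₀)). -/
open MulOpposite

section ExtraShortRoot

variable {R : Type*} [Ring R] {V₀ : Type*} [AddCommGroup V₀] [Module Rᵐᵒᵖ V₀]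
  {n : ℕ} (e : Rˣ) (B₀ : V₀ → V₀ → R)

theorem negIdx_ne_self (i : Fin n ⊕ Fin n) : negIdx i ≠ i := by
  cases i <;> simp [negIdx]

theorem Textra_fst_self (i : Fin n ⊕ Fin n) (v₀ : V₀) (x : R)
    (p : (Fin n ⊕ Fin n → R) × V₀) :
    (Textra e B₀ i v₀ x p).1 i = p.1 i + (eps e i * x * p.1 (negIdx i) - eps e i * B₀ v₀ p.2) := by
  simp [Textra]

theorem Textra_fst_of_ne {i k : Fin n ⊕ Fin n} (hk : k ≠ i) (v₀ : V₀) (x : R)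
    (p : (Fin n ⊕ Fin n → R) × V₀) : (Textra e B₀ i v₀ x p).1 k = p.1 k := by
  simp [Textra, hk]

theorem Textra_snd (i : Fin n ⊕ Fin n) (v₀ : V₀) (x : R) (p : (Fin n ⊕ Fin n → R) × V₀) :
    (Textra e B₀ i v₀ x p).2 = p.2 - op (p.1 (negIdx i)) • v₀ :=
  rfl

/-- Right linearity, from sesquilinearity with left scalar `1`, since `bar 1 * e⁻¹ = e * e⁻¹ = 1`. -/
theorem apply_op_smul_right_of_sesq (bar : R → R) (he : (e : R) = bar 1)
    (hB_sesq : ∀ (v w : V₀) (x y : R),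
      B₀ (op x • v) (op y • w) = bar x * (↑e⁻¹ : R) * B₀ v w * y)
    (v w : V₀) (r : R) : B₀ v (op r • w) = B₀ v w * r := by
  simpa [← he] using hB_sesq v w 1 r

end ExtraShortRoot

theorem stmt17_general {R : Type*} [Ring R] {V₀ : Type*} [AddCommGroup V₀] [Module Rᵐᵒᵖ V₀]
    (bar : R → R) (e : Rˣ) (he : (e : R) = bar 1)
    (B₀ : V₀ → V₀ → R)
    (hB_addl : ∀ u v w : V₀, B₀ (u + v) w = B₀ u w + B₀ v w)
    (hB_addr : ∀ u v w : V₀, B₀ u (v + w) = B₀ u v + B₀ u w)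
    (hB_sesq : ∀ (v w : V₀) (x y : R),
      B₀ (op x • v) (op y • w) = bar x * (↑e⁻¹ : R) * B₀ v w * y)
    {n : ℕ} (i : Fin n ⊕ Fin n) (v₀ w₀ : V₀) (x y : R) :
    ∀ p : (Fin n ⊕ Fin n → R) × V₀,
      Textra e B₀ i v₀ x (Textra e B₀ i w₀ y p)
        = Textra e B₀ i (v₀ + w₀) (x + y + B₀ v₀ w₀) p := by
  intro p
  have hne := negIdx_ne_self i
  have hB_sub (a b : V₀) : B₀ v₀ (a - b) = B₀ v₀ a - B₀ v₀ b :=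
    map_sub (AddMonoidHom.mk' (B₀ v₀) (hB_addr v₀)) a b
  have hB_smul := apply_op_smul_right_of_sesq e B₀ bar he hB_sesq v₀ w₀
  refine Prod.ext (funext fun k => ?_) ?_
  · by_cases hk : k = i
    · -- The cross term `B₀ v₀ (p.2 - op (p.1 (negIdx i)) • w₀)` supplies the `B₀ v₀ w₀` summand.
      subst hk
      simp only [Textra_fst_self, Textra_snd, Textra_fst_of_ne e B₀ hne, hB_sub, hB_smul, hB_addl]
      noncomm_ring
    · simp only [Textra_fst_of_ne e B₀ hk]
  · simp only [Textra_snd, Textra_fst_of_ne e B₀ hne, smul_add]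
    abel

/-- extra short root transvections with the same index multiply
according to the Heisenberg group operation:
T_i(v₀,x)·T_i(w₀,y) = T_i(v₀ + w₀, x + y + B₀(v₀,w₀)). -/
theorem stmt17 {R : Type*} [Ring R] {V₀ : Type*} [AddCommGroup V₀] [Module Rᵐᵒᵖ V₀]
    (bar : R → R) (e : Rˣ) (he : (e : R) = bar 1)
    (hbar_add : ∀ x y : R, bar (x + y) = bar x + bar y)
    (hbar_mul : ∀ x y : R, bar (x * y) = bar y * (↑e⁻¹ : R) * bar x)
    (hbar_bar : ∀ x : R, bar (bar x) = x)
    (B₀ : V₀ → V₀ → R)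
    (hB_addl : ∀ u v w : V₀, B₀ (u + v) w = B₀ u w + B₀ v w)
    (hB_addr : ∀ u v w : V₀, B₀ u (v + w) = B₀ u v + B₀ u w)
    (hB_sesq : ∀ (v w : V₀) (x y : R),
      B₀ (op x • v) (op y • w) = bar x * (↑e⁻¹ : R) * B₀ v w * y)
    (hB_skew : ∀ v w : V₀, B₀ v w = - bar (B₀ w v))
    (L₀ : Set (V₀ × R))
    {n : ℕ} (i : Fin n ⊕ Fin n) (v₀ w₀ : V₀) (x y : R)
    (hv : ((v₀, x) : V₀ × R) ∈ L₀) (hw : ((w₀, y) : V₀ × R) ∈ L₀) :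
    ∀ p : (Fin n ⊕ Fin n → R) × V₀,
      Textra e B₀ i v₀ x (Textra e B₀ i w₀ y p)
        = Textra e B₀ i (v₀ + w₀) (x + y + B₀ v₀ w₀) p :=
  stmt17_general bar e he B₀ hB_addl hB_addr hB_sesq i v₀ w₀ x y
end
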